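/- arXiv:2402.06345 — 2 statements merged into one kernel-verified Lean document; each statement's English description precedes it below -/
import Mathlib

section
/- Let X be a Banach space, Y a Hilbert space, and T, S : X → Y bounded linear operators such that S is an isomorphism onto its closed image. Let p : Y → Y be the orthogonal projection onto S(X) and S⁻¹ : S(X) → X the inverse of S. Then argmax_{‖S(x)‖≤1} ‖T(x)‖ = S⁻¹(S(X) ∩ suppv(T ∘ S⁻¹ ∘ p)), where suppv(R) = argmax_{‖y‖≤1} ‖R(y)‖. -/
/-!
The orthogonal projection `p` is a contraction fixing `S(X)`, so it maps the unit ball of `Y`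
onto the unit ball of `S(X)`. Hence maximising `‖T S⁻¹ p y‖` over the
unit ball of `Y` is the same as maximising `‖T S⁻¹ y‖` over `S(X)` ∩ ball, i.e. `‖T x‖` over
`‖S x‖ ≤ 1`.
-/

open scoped RealInnerProductSpace

open Set in
theorem image_inter_argmax_comp_retraction {α β γ : Type*} [Preorder γ]
    {S : α → β} {Sinv : β → α} {p : β → β} (K : Set β) (φ : α → γ)
    (hSinv : Function.LeftInverse Sinv S) (hfix : ∀ y ∈ range S, p y = y)
    (hmaps : MapsTo p K (K ∩ range S)) :
    {x | S x ∈ K ∧ ∀ z, S z ∈ K → φ z ≤ φ x} =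
      Sinv '' (range S ∩ {y | y ∈ K ∧ ∀ z ∈ K, φ (Sinv (p z)) ≤ φ (Sinv (p y))}) := by
  ext x
  constructor
  · rintro ⟨hxK, hmax⟩
    refine ⟨S x, ⟨mem_range_self x, hxK, fun z hz => ?_⟩, hSinv x⟩
    obtain ⟨hpzK, w, hw⟩ := hmaps hz
    rw [hfix _ (mem_range_self x), hSinv x, ← hw, hSinv w]
    exact hmax w (hw ▸ hpzK)
  · rintro ⟨_, ⟨⟨w, rfl⟩, hwK, hmax⟩, rfl⟩
    rw [hSinv w]
    refine ⟨hwK, fun z hz => ?_⟩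
    simpa only [hfix _ (mem_range_self _), hSinv _] using hmax (S z) hz

theorem IsStarProjection.norm_apply_le {𝕜 E : Type*} [RCLike 𝕜]
    [NormedAddCommGroup E] [InnerProductSpace 𝕜 E] [CompleteSpace E] {p : E →L[𝕜] E}
    (hp : IsStarProjection p) (x : E) : ‖p x‖ ≤ ‖x‖ :=
  p.le_of_opNorm_le hp.norm_le x |>.trans_eq (one_mul _)

theorem stmt_11_general {X Y : Type*}
    [NormedAddCommGroup X] [NormedSpace ℝ X]
    [NormedAddCommGroup Y] [InnerProductSpace ℝ Y] [CompleteSpace Y]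
    (T S : X →L[ℝ] Y) (Sinv : Y →L[ℝ] X) (hSinv : ∀ x : X, Sinv (S x) = x)
    (p : Y →L[ℝ] Y) (hp : p.comp p = p) (hprange : Set.range p = Set.range S)
    (hpsym : ∀ y z : Y, ⟪p y, z⟫ = ⟪y, p z⟫) :
    {x : X | ‖S x‖ ≤ 1 ∧ ∀ z : X, ‖S z‖ ≤ 1 → ‖T z‖ ≤ ‖T x‖} =
      Sinv '' (Set.range S ∩
        {y : Y | ‖y‖ ≤ 1 ∧ ∀ z : Y, ‖z‖ ≤ 1 → ‖T (Sinv (p z))‖ ≤ ‖T (Sinv (p y))‖}) := by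
  have hproj : IsStarProjection p :=
    ContinuousLinearMap.isStarProjection_iff_isSymmetricProjection.mpr
      ⟨congr(ContinuousLinearMap.toLinearMap $hp), hpsym⟩
  have hfix : ∀ y ∈ Set.range S, p y = y := by
    rw [← hprange]
    rintro _ ⟨u, rfl⟩
    exact congr($hp u)
  have hmaps : Set.MapsTo p (Metric.closedBall 0 1) (Metric.closedBall 0 1 ∩ Set.range S) :=
    fun z hz => ⟨mem_closedBall_zero_iff.mpr <|
        (hproj.norm_apply_le z).trans (mem_closedBall_zero_iff.mp hz),
      hprange ▸ Set.mem_range_self z⟩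
  simpa only [mem_closedBall_zero_iff] using
    image_inter_argmax_comp_retraction (Metric.closedBall 0 1) (fun x => ‖T x‖) hSinv hfix hmaps

theorem stmt_11 {X Y : Type*}
    [NormedAddCommGroup X] [NormedSpace ℝ X] [CompleteSpace X]
    [NormedAddCommGroup Y] [InnerProductSpace ℝ Y] [CompleteSpace Y]
    (T S : X →L[ℝ] Y) (Sinv : Y →L[ℝ] X) (hSinv : ∀ x : X, Sinv (S x) = x)
    (hclosed : IsClosed (Set.range S))
    (p : Y →L[ℝ] Y) (hp : p.comp p = p) (hprange : Set.range p = Set.range S)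
    (hpsym : ∀ y z : Y, ⟪p y, z⟫ = ⟪y, p z⟫) :
    {x : X | ‖S x‖ ≤ 1 ∧ ∀ z : X, ‖S z‖ ≤ 1 → ‖T z‖ ≤ ‖T x‖} =
      Sinv '' (Set.range S ∩
        {y : Y | ‖y‖ ≤ 1 ∧ ∀ z : Y, ‖z‖ ≤ 1 → ‖T (Sinv (p z))‖ ≤ ‖T (Sinv (p y))‖}) :=
  stmt_11_general T S Sinv hSinv p hp hprange hpsym
end

section
/- Let A, B be real m×n matrices with ker(B) = {0}, and let B⁺ denote the Moore–Penrose inverse of B. Then B(argmax_{‖Bx‖₂≤1} ‖Ax‖₂) = B(ℝⁿ) ∩ argmax_{‖y‖₂≤1} ‖AB⁺y‖₂. -/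
/-!
Since `B` is injective and `B B⁺ B = B`, `B⁺` is a left inverse of `B`, so `x ↦ B x` maps the
feasible set `‖B x‖ ≤ 1` onto the unit ball of `range B`, with `A B⁺ (B x) = A x`. The two
maximisation problems therefore agree on `range B`, and the maximum over `range B` is the maximum
over the whole unit ball because `A B⁺ z = A B⁺ (B B⁺ z)` and the orthogonal projection `B B⁺`
does not increase norms.
-/

open Matrix

/-- Euclidean norm of a vector in `Fin k → ℝ`. -/
noncomputable def enorm' {k : ℕ} (v : Fin k → ℝ) : ℝ := Real.sqrt (∑ i, v i ^ 2)

lemma enorm'_eq_sqrt_dotProduct {k : ℕ} (v : Fin k → ℝ) : enorm' v = Real.sqrt (v ⬝ᵥ v) := by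
  simp [enorm', dotProduct, sq]

lemma enorm'_mulVec_le_of_isSymm_of_isIdempotentElem {k : ℕ} {P : Matrix (Fin k) (Fin k) ℝ}
    (hP : P.IsSymm) (hPP : IsIdempotentElem P) (z : Fin k → ℝ) :
    enorm' (P *ᵥ z) ≤ enorm' z := by
  have hself : (P *ᵥ z) ⬝ᵥ (P *ᵥ z) = z ⬝ᵥ (P *ᵥ z) := by
    rw [dotProduct_mulVec, ← mulVec_transpose, hP.eq, mulVec_mulVec, hPP.eq, dotProduct_comm]
  have hdiff : 0 ≤ (z - P *ᵥ z) ⬝ᵥ (z - P *ᵥ z) :=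
    Finset.sum_nonneg fun i _ => mul_self_nonneg _
  rw [enorm'_eq_sqrt_dotProduct, enorm'_eq_sqrt_dotProduct]
  apply Real.sqrt_le_sqrt
  simp only [sub_dotProduct, dotProduct_sub, dotProduct_comm (P *ᵥ z) z, hself] at hdiff
  linarith

lemma Matrix.mulVec_mulVec_of_mul_mul_eq {R m n : Type*} [CommRing R] [Fintype m] [Fintype n]
    {B : Matrix m n R} {C : Matrix n m R} (hB : ∀ x, B *ᵥ x = 0 → x = 0) (hBCB : B * C * B = B)
    (x : n → R) : C *ᵥ (B *ᵥ x) = x :=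
  sub_eq_zero.mp <| hB _ <| by rw [mulVec_sub, mulVec_mulVec, mulVec_mulVec, hBCB, sub_self]

theorem stmt_12_general {m n : ℕ} (A B : Matrix (Fin m) (Fin n) ℝ)
    (hkerB : ∀ x : Fin n → ℝ, B.mulVec x = 0 → x = 0)
    (Bplus : Matrix (Fin n) (Fin m) ℝ)
    (h1 : B * Bplus * B = B)
    (h3 : (B * Bplus)ᵀ = B * Bplus) :
    B.mulVec '' {x : Fin n → ℝ | enorm' (B.mulVec x) ≤ 1 ∧
        ∀ z : Fin n → ℝ, enorm' (B.mulVec z) ≤ 1 → enorm' (A.mulVec z) ≤ enorm' (A.mulVec x)} =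
      Set.range B.mulVec ∩
        {y : Fin m → ℝ | enorm' y ≤ 1 ∧
          ∀ z : Fin m → ℝ, enorm' z ≤ 1 →
            enorm' (A.mulVec (Bplus.mulVec z)) ≤ enorm' (A.mulVec (Bplus.mulVec y))} := by
  have hleft := mulVec_mulVec_of_mul_mul_eq hkerB h1
  have hproj : ∀ z, enorm' (B *ᵥ (Bplus *ᵥ z)) ≤ enorm' z := fun z => by
    rw [mulVec_mulVec]
    exact enorm'_mulVec_le_of_isSymm_of_isIdempotentElem h3
      (by rw [IsIdempotentElem, ← Matrix.mul_assoc, h1]) z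
  ext y
  constructor
  · rintro ⟨x, ⟨hx, hmax⟩, rfl⟩
    refine ⟨⟨x, rfl⟩, hx, fun z hz => ?_⟩
    rw [hleft x]
    exact hmax _ ((hproj z).trans hz)
  · rintro ⟨⟨x, rfl⟩, hx, hmax⟩
    refine ⟨x, ⟨hx, fun z hz => ?_⟩, rfl⟩
    simpa only [hleft] using hmax (B *ᵥ z) hz

theorem stmt_12 {m n : ℕ} (A B : Matrix (Fin m) (Fin n) ℝ)
    (hkerB : ∀ x : Fin n → ℝ, B.mulVec x = 0 → x = 0)
    (Bplus : Matrix (Fin n) (Fin m) ℝ)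
    (h1 : B * Bplus * B = B) (h2 : Bplus * B * Bplus = Bplus)
    (h3 : (B * Bplus)ᵀ = B * Bplus) (h4 : (Bplus * B)ᵀ = Bplus * B) :
    B.mulVec '' {x : Fin n → ℝ | enorm' (B.mulVec x) ≤ 1 ∧
        ∀ z : Fin n → ℝ, enorm' (B.mulVec z) ≤ 1 → enorm' (A.mulVec z) ≤ enorm' (A.mulVec x)} =
      Set.range B.mulVec ∩
        {y : Fin m → ℝ | enorm' y ≤ 1 ∧
          ∀ z : Fin m → ℝ, enorm' z ≤ 1 →
            enorm' (A.mulVec (Bplus.mulVec z)) ≤ enorm' (A.mulVec (Bplus.mulVec y))} :=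
  stmt_12_general A B hkerB Bplus h1 h3
end
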